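/- Let Σ be a compact metric space, (η⁰, T⁰) a Clausius-Duhem pair (η⁰, T⁰ continuous, T⁰ > 0), and suppose that for each pair of distinct states σ, σ' ∈ Σ the cone P̂ contains a reversible element of the form (δ_{σ'} - δ_σ, q) for some signed measure q (together with its negative). Then any other continuous η : Σ → ℝ satisfying ∫η dv ≥ ∫(1/T⁰) dw for all (v,w) ∈ P̂ differs from η⁰ by a constant. -/
import Mathlib


open MeasureTheory

/-- Integral of a real function against a finite signed Borel measure, via the
Jordan decomposition. -/
noncomputable def sintegral {Ω : Type*} [MeasurableSpace Ω]
    (μ : SignedMeasure Ω) (f : Ω → ℝ) : ℝ :=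
  (∫ x, f x ∂μ.toJordanDecomposition.posPart) - ∫ x, f x ∂μ.toJordanDecomposition.negPart

lemma sintegral_neg {Ω : Type*} [MeasurableSpace Ω] (μ : SignedMeasure Ω) (f : Ω → ℝ) :
    sintegral (-μ) f = - sintegral μ f := by
  simp [sintegral, SignedMeasure.toJordanDecomposition_neg]

lemma jordan_dirac {Ω : Type*} [MeasurableSpace Ω] [MeasurableSingletonClass Ω]
    {σ σ' : Ω} (h : σ ≠ σ') :
    ((Measure.dirac σ').toSignedMeasure - (Measure.dirac σ).toSignedMeasure).toJordanDecomposition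
      = ⟨Measure.dirac σ', Measure.dirac σ,
        ⟨{σ}, measurableSet_singleton σ, by simp [Measure.dirac_apply', h.symm],
          by simp [Measure.dirac_apply']⟩⟩ := by
  have : (Measure.dirac σ').toSignedMeasure - (Measure.dirac σ).toSignedMeasure =
      (⟨Measure.dirac σ', Measure.dirac σ,
        ⟨{σ}, measurableSet_singleton σ, by simp [Measure.dirac_apply', h.symm],
          by simp [Measure.dirac_apply']⟩⟩ :
        JordanDecomposition Ω).toSignedMeasure := rfl
  rw [this, JordanDecomposition.toJordanDecomposition_toSignedMeasure]

lemma sintegral_dirac_sub {Ω : Type*} [MeasurableSpace Ω] [MeasurableSingletonClass Ω]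
    {σ σ' : Ω} (h : σ ≠ σ') {f : Ω → ℝ} (hf : StronglyMeasurable f) :
    sintegral ((Measure.dirac σ').toSignedMeasure - (Measure.dirac σ).toSignedMeasure) f
      = f σ' - f σ := by
  rw [sintegral, jordan_dirac h]
  simp [integral_dirac' _ _ hf]

/-- Entropy uniqueness: if every pair of distinct states is reversibly related in `P̂`,
then any two Clausius-Duhem entropy functions corresponding to the same temperature
scale `T⁰` differ by a constant. -/
theorem reversibly_related_states_force_entropy_uniqueness
    {Ω : Type*} [MetricSpace Ω] [CompactSpace Ω] [MeasurableSpace Ω] [BorelSpace Ω]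
    (Phat : Set (SignedMeasure Ω × SignedMeasure Ω))
    (η₀ T₀ : Ω → ℝ) (hη₀ : Continuous η₀) (hT₀ : Continuous T₀) (hT₀pos : ∀ x, 0 < T₀ x)
    (hCD₀ : ∀ p ∈ Phat, sintegral p.1 η₀ ≥ sintegral p.2 (fun x => 1 / T₀ x))
    (hrev : ∀ σ σ' : Ω, σ ≠ σ' → ∃ q : SignedMeasure Ω,
      ((Measure.dirac σ').toSignedMeasure - (Measure.dirac σ).toSignedMeasure, q) ∈ Phat ∧
      -(((Measure.dirac σ').toSignedMeasure - (Measure.dirac σ).toSignedMeasure, q)) ∈ Phat)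
    (η : Ω → ℝ) (hη : Continuous η)
    (hCD : ∀ p ∈ Phat, sintegral p.1 η ≥ sintegral p.2 (fun x => 1 / T₀ x)) :
    ∃ c : ℝ, ∀ x, η x = η₀ x + c := by
  cases isEmpty_or_nonempty Ω with
  | inl hemp => exact ⟨0, fun x => (hemp.false x).elim⟩
  | inr hne =>
    obtain ⟨σ₀⟩ := hne
    refine ⟨η σ₀ - η₀ σ₀, fun x => ?_⟩
    rcases eq_or_ne x σ₀ with rfl | hx
    · ring
    · obtain ⟨q, hmem, hmemneg⟩ := hrev σ₀ x hx.symm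
      have key : ∀ g : Ω → ℝ, Continuous g →
          (∀ p ∈ Phat, sintegral p.1 g ≥ sintegral p.2 (fun y => 1 / T₀ y)) →
          g x - g σ₀ = sintegral q (fun y => 1 / T₀ y) := by
        intro g hg hCDg
        have h1 := hCDg _ hmem
        have h2 := hCDg _ hmemneg
        simp only [Prod.fst, Prod.snd] at h1 h2
        rw [sintegral_dirac_sub hx.symm hg.stronglyMeasurable] at h1
        have hneg : (-(((Measure.dirac x).toSignedMeasure -
            (Measure.dirac σ₀).toSignedMeasure, q) :
            SignedMeasure Ω × SignedMeasure Ω)).1 =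
            -((Measure.dirac x).toSignedMeasure - (Measure.dirac σ₀).toSignedMeasure) := rfl
        rw [hneg, sintegral_neg, sintegral_dirac_sub hx.symm hg.stronglyMeasurable,
          show (-(((Measure.dirac x).toSignedMeasure -
            (Measure.dirac σ₀).toSignedMeasure, q) :
            SignedMeasure Ω × SignedMeasure Ω)).2 = -q from rfl, sintegral_neg] at h2
        linarith
      have h₁ := key η hη hCD
      have h₂ := key η₀ hη₀ hCD₀
      linarith
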